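/- arXiv:1509.07656 — 4 statements merged into one kernel-verified Lean document; each statement's English description precedes it below -/
import Mathlib

section
/- Let V be a ℤ/2-graded complex vector space equipped with a decomposition V = ⨁_{m∈ℤ} V_m into finite-dimensional graded subspaces (the weight spaces of the circle action), and let U and S be odd linear endomorphisms of V such that U(V_m) ⊆ V_m and S(V_m) ⊆ V_m for all m, and for every v ∈ V_m: U²v = −i·m·v, S²v = −i·m·v, and (US + SU)v = 0. Then for every m ≠ 0, the weight space V_m decomposes as a finite direct sum of graded subspaces W_j of dimension 1|1, each invariant under both U and S, admitting a homogeneous basis f_j (even), φ_j (odd) with U f_j = μ φ_j, U φ_j = μ f_j, S f_j = ε_j iμ φ_j, S φ_j = −ε_j iμ f_j, where μ ∈ ℂ satisfies μ² = −i·m and ε_j ∈ {+1, −1}. Hence V is isomorphic to V₀ ⊕ ⨁ W_m⁺ ⊕ ⨁ W_k⁻, where W_m^± are the super weight spaces of SU(1|1). -/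
/-!
On the even part `E` of `V_m` the even operator `T = U S` satisfies `T² = -μ⁴`, where
`μ² = -i m`, because `U` and `S` anticommute; as `m ≠ 0`, `E` splits into the `T`-eigenspaces
for `±iμ²`, and we choose an eigenbasis `f_j` of `E`. Since `μ⁻¹ U` is an involution of `V_m`
exchanging its even and odd parts, the vectors `φ_j = μ⁻¹ U f_j` form a basis of the odd part,
and the action of `S` on `f_j, φ_j` is read off from `T f_j = ±iμ² f_j` and `U² = μ²`.
-/

open Function Submodule Set

section LinearAlgebra

variable {K M : Type*} [Field K] [AddCommGroup M] [Module K M]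

theorem iSupIndep_span_image_of_pairwise_disjoint {ι κ : Type*} {v : ι → M}
    (hv : LinearIndependent K v) {s : κ → Set ι} (hs : Pairwise (Disjoint on s)) :
    iSupIndep fun k => span K (v '' s k) := by
  refine iSupIndep_def.2 fun k => ?_
  simp only [← span_iUnion₂, ← image_iUnion₂]
  exact hv.disjoint_span_image (disjoint_iUnion₂_right.2 fun j hj => hs (Ne.symm hj))

theorem iSupIndep_span_pair {ι : Type*} {u v : ι → M}
    (huv : LinearIndependent K (Sum.elim u v)) :
    iSupIndep fun i => span K {u i, v i} := by
  have hs : Pairwise (Disjoint on fun i : ι => ({.inl i, .inr i} : Set (ι ⊕ ι))) := by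
    intro i j hij
    simp [Set.disjoint_left, hij]
  simpa [image_pair] using iSupIndep_span_image_of_pairwise_disjoint huv hs

theorem iSup_span_pair {ι : Type*} (u v : ι → M) :
    ⨆ i, span K {u i, v i} = span K (range u) ⊔ span K (range v) := by
  simp only [span_insert, iSup_sup_eq, span_range_eq_iSup]

theorem span_pair_eq_inf_sup_inf {p q : Submodule K M} {x y : M} (hx : x ∈ p) (hy : y ∈ q) :
    span K {x, y} = span K {x, y} ⊓ p ⊔ span K {x, y} ⊓ q := by
  refine le_antisymm (span_le.2 ?_) (sup_le inf_le_left inf_le_left)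
  rintro z (rfl | rfl)
  · exact mem_sup_left ⟨subset_span (mem_insert _ _), hx⟩
  · exact mem_sup_right ⟨subset_span (mem_insert_of_mem _ rfl), hy⟩

theorem mapsTo_span_pair {T : M →ₗ[K] M} {x y : M} {a b : K} (hx : T x = a • y)
    (hy : T y = b • x) : ∀ z ∈ span K {x, y}, T z ∈ span K {x, y} := by
  suffices span K {x, y} ≤ (span K {x, y}).comap T from fun z hz => this hz
  refine span_le.2 ?_
  rintro z (rfl | rfl)
  · rw [SetLike.mem_coe, mem_comap, hx]
    exact smul_mem _ a (subset_span (mem_insert_of_mem _ rfl))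
  · rw [SetLike.mem_coe, mem_comap, hy]
    exact smul_mem _ b (subset_span (mem_insert _ _))

theorem map_eq_of_forall_apply_apply_eq {L : M →ₗ[K] M} {p q : Submodule K M}
    (hpq : ∀ x ∈ p, L x ∈ q) (hqp : ∀ x ∈ q, L x ∈ p) (hq : ∀ x ∈ q, L (L x) = x) :
    p.map L = q := by
  refine le_antisymm (map_le_iff_le_comap.2 hpq) fun y hy => ?_
  exact ⟨L y, hqp y hy, hq y hy⟩

theorem disjoint_ker_of_forall_apply_apply_eq {L : M →ₗ[K] M} {p : Submodule K M}
    (hp : ∀ x ∈ p, L (L x) = x) : Disjoint p (LinearMap.ker L) := by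
  refine disjoint_def.2 fun x hx hker => ?_
  rw [← hp x hx, LinearMap.mem_ker.1 hker, map_zero]

end LinearAlgebra

section Eigenspaces

variable {K M : Type*} [Field K] [AddCommGroup M] [Module K M]
  {T : Module.End K M} {p : Submodule K M} {a : K}

open Module.End

theorem inf_eigenspace_sup_inf_eigenspace_neg [NeZero (2 : K)] (ha : a ≠ 0)
    (hTp : ∀ x ∈ p, T x ∈ p) (hT2 : ∀ x ∈ p, T (T x) = a ^ 2 • x) :
    p ⊓ T.eigenspace a ⊔ p ⊓ T.eigenspace (-a) = p := by
  refine le_antisymm (sup_le inf_le_left inf_le_left) fun x hx => ?_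
  have hTx := hTp x hx
  have hpos : (2 : K)⁻¹ • (x + a⁻¹ • T x) ∈ p ⊓ T.eigenspace a := by
    refine ⟨smul_mem _ _ (add_mem hx (smul_mem _ _ hTx)), mem_eigenspace_iff.2 ?_⟩
    rw [map_smul, map_add, map_smul, hT2 x hx]
    match_scalars <;> field_simp
  have hneg : (2 : K)⁻¹ • (x - a⁻¹ • T x) ∈ p ⊓ T.eigenspace (-a) := by
    refine ⟨smul_mem _ _ (sub_mem hx (smul_mem _ _ hTx)), mem_eigenspace_iff.2 ?_⟩
    rw [map_smul, map_sub, map_smul, hT2 x hx]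
    match_scalars <;> field_simp
  convert add_mem (mem_sup_left hpos) (mem_sup_right hneg) using 1
  match_scalars <;> field_simp <;> ring

theorem exists_linearIndependent_eigenvectors_of_sq_eq [NeZero (2 : K)]
    [FiniteDimensional K p] (ha : a ≠ 0) (hTp : ∀ x ∈ p, T x ∈ p)
    (hT2 : ∀ x ∈ p, T (T x) = a ^ 2 • x) :
    ∃ (n : ℕ) (g : Fin n → M) (ε : Fin n → K), LinearIndependent K g ∧
      span K (range g) = p ∧ ∀ j, (ε j = 1 ∨ ε j = -1) ∧ T (g j) = (ε j * a) • g j := by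
  set P := p ⊓ T.eigenspace a
  set Q := p ⊓ T.eigenspace (-a)
  have hbasis : ∀ (q : Submodule K M) [FiniteDimensional K q],
      LinearIndependent K (q.subtype ∘ Module.finBasis K q) ∧
        span K (range (q.subtype ∘ Module.finBasis K q)) = q := fun q _ =>
    ⟨(Module.finBasis K q).linearIndependent.map' _ q.ker_subtype, by
      rw [range_comp, span_image, (Module.finBasis K q).span_eq, map_subtype_top]⟩
  have : FiniteDimensional K P := finiteDimensional_of_le inf_le_left
  have : FiniteDimensional K Q := finiteDimensional_of_le inf_le_left
  have hPQ : Disjoint P Q := by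
    refine (T.eigenspaces_iSupIndep.pairwiseDisjoint ?_).mono inf_le_right inf_le_right
    intro h
    have h2a : (2 : K) * a = 0 := by linear_combination h
    exact ha ((mul_eq_zero.1 h2a).resolve_left two_ne_zero)
  set g := Sum.elim (P.subtype ∘ Module.finBasis K P) (Q.subtype ∘ Module.finBasis K Q)
  set ε : _ → K := Sum.elim (fun _ => 1) (fun _ => -1)
  have hg : LinearIndependent K g := by
    refine (hbasis P).1.sum_type (hbasis Q).1 ?_
    rwa [(hbasis P).2, (hbasis Q).2]
  have hgspan : span K (range g) = p := by
    rw [Sum.elim_range, span_union, (hbasis P).2, (hbasis Q).2,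
      inf_eigenspace_sup_inf_eigenspace_neg ha hTp hT2]
  have hgT : ∀ k, T (g k) = (ε k * a) • g k := by
    rintro (i | i)
    · simpa [g, ε] using mem_eigenspace_iff.1 (Module.finBasis K P i).2.2
    · simpa [g, ε] using mem_eigenspace_iff.1 (Module.finBasis K Q i).2.2
  have hε : ∀ k, ε k = 1 ∨ ε k = -1 := by rintro (i | i) <;> simp [ε]
  refine ⟨_, g ∘ finSumFinEquiv.symm, ε ∘ finSumFinEquiv.symm,
    hg.comp _ finSumFinEquiv.symm.injective, ?_, fun j => ⟨hε _, hgT _⟩⟩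
  rwa [finSumFinEquiv.symm.surjective.range_comp]

end Eigenspaces

section WeightSpace

variable {V : Type*} [AddCommGroup V] [Module ℂ V] {Vm : Submodule ℂ V} {U S : V →ₗ[ℂ] V}
  {μ : ℂ}

theorem comp_apply_comp_apply_eq_of_anticommute (hSw : ∀ v ∈ Vm, S v ∈ Vm)
    (hU2 : ∀ v ∈ Vm, U (U v) = μ ^ 2 • v) (hS2 : ∀ v ∈ Vm, S (S v) = μ ^ 2 • v)
    (hUS : ∀ v ∈ Vm, U (S v) + S (U v) = 0) :
    ∀ v ∈ Vm, (U ∘ₗ S) ((U ∘ₗ S) v) = (Complex.I * μ ^ 2) ^ 2 • v := by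
  intro v hv
  rw [LinearMap.comp_apply, LinearMap.comp_apply, eq_neg_of_add_eq_zero_right (hUS _ (hSw v hv)),
    map_neg, hS2 v hv, map_smul, map_smul, hU2 v hv, smul_smul, ← neg_smul]
  congr 1
  linear_combination (-μ ^ 4) * Complex.I_sq

theorem inv_smul_apply_inv_smul_apply (hμ : μ ≠ 0) (hU2 : ∀ v ∈ Vm, U (U v) = μ ^ 2 • v) :
    ∀ v ∈ Vm, (μ⁻¹ • U) ((μ⁻¹ • U) v) = v := by
  intro v hv
  rw [LinearMap.smul_apply, LinearMap.smul_apply, map_smul, hU2 v hv, smul_smul, smul_smul]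
  convert one_smul ℂ v
  field_simp

theorem su11_pair_relations (hμ : μ ≠ 0) (hSw : ∀ v ∈ Vm, S v ∈ Vm)
    (hU2 : ∀ v ∈ Vm, U (U v) = μ ^ 2 • v) (hUS : ∀ v ∈ Vm, U (S v) + S (U v) = 0)
    {f : V} (hf : f ∈ Vm) {ε : ℂ} (hT : U (S f) = (ε * (Complex.I * μ ^ 2)) • f) :
    U f = μ • (μ⁻¹ • U) f ∧ U ((μ⁻¹ • U) f) = μ • f ∧
      S f = (ε * (Complex.I * μ)) • (μ⁻¹ • U) f ∧
      S ((μ⁻¹ • U) f) = (-(ε * (Complex.I * μ))) • f := by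
  simp only [LinearMap.smul_apply]
  have hUUS : μ ^ 2 • S f = (ε * (Complex.I * μ ^ 2)) • U f := by
    rw [← hU2 _ (hSw f hf), hT, map_smul]
  refine ⟨(smul_inv_smul₀ hμ _).symm, ?_, ?_, ?_⟩
  · rw [map_smul, hU2 f hf, smul_smul]
    congr 1
    field_simp
  · calc S f = (μ ^ 2)⁻¹ • μ ^ 2 • S f := (inv_smul_smul₀ (pow_ne_zero 2 hμ) _).symm
      _ = _ := by
        rw [hUUS, smul_smul, smul_smul]
        congr 1
        field_simp
  · rw [map_smul, eq_neg_of_add_eq_zero_right (hUS f hf), hT, smul_neg, smul_smul, ← neg_smul]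
    congr 1
    field_simp

end WeightSpace

theorem su11_structure_theorem_general
    (V : Type*) [AddCommGroup V] [Module ℂ V]
    (V0 V1 : Submodule ℂ V) (hgrading : IsCompl V0 V1)
    (Vw : ℤ → Submodule ℂ V)
    (hVwGraded : ∀ m : ℤ, Vw m = (Vw m ⊓ V0) ⊔ (Vw m ⊓ V1))
    (hVwFin : ∀ m : ℤ, FiniteDimensional ℂ ↥(Vw m))
    (U S : V →ₗ[ℂ] V)
    (hU0 : ∀ v ∈ V0, U v ∈ V1) (hU1 : ∀ v ∈ V1, U v ∈ V0)
    (hS0 : ∀ v ∈ V0, S v ∈ V1)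
    (hUw : ∀ m : ℤ, ∀ v ∈ Vw m, U v ∈ Vw m)
    (hSw : ∀ m : ℤ, ∀ v ∈ Vw m, S v ∈ Vw m)
    (hU2 : ∀ m : ℤ, ∀ v ∈ Vw m, U (U v) = (-Complex.I * (m : ℂ)) • v)
    (hS2 : ∀ m : ℤ, ∀ v ∈ Vw m, S (S v) = (-Complex.I * (m : ℂ)) • v)
    (hUS : ∀ m : ℤ, ∀ v ∈ Vw m, U (S v) + S (U v) = 0) :
    ∀ m : ℤ, m ≠ 0 →
      ∃ (n : ℕ) (W : Fin n → Submodule ℂ V) (μ : ℂ),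
        μ ^ 2 = -Complex.I * (m : ℂ) ∧
        iSupIndep W ∧ (⨆ j : Fin n, W j) = Vw m ∧
        ∀ j : Fin n,
          W j = (W j ⊓ V0) ⊔ (W j ⊓ V1) ∧
          (∀ v ∈ W j, U v ∈ W j) ∧ (∀ v ∈ W j, S v ∈ W j) ∧
          ∃ (f φ : V) (ε : ℂ), (ε = 1 ∨ ε = -1) ∧
            f ∈ V0 ∧ φ ∈ V1 ∧ f ≠ 0 ∧ φ ≠ 0 ∧
            U f = μ • φ ∧ U φ = μ • f ∧
            S f = (ε * (Complex.I * μ)) • φ ∧ S φ = (-(ε * (Complex.I * μ))) • f ∧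
            W j = Submodule.span ℂ {f, φ} := by
  intro m hm
  obtain ⟨μ, hμ⟩ := IsAlgClosed.exists_pow_nat_eq (-Complex.I * m) two_pos
  have hμ0 : μ ≠ 0 := by rintro rfl; simp [hm] at hμ
  have hU2m : ∀ v ∈ Vw m, U (U v) = μ ^ 2 • v := hμ ▸ hU2 m
  have hS2m : ∀ v ∈ Vw m, S (S v) = μ ^ 2 • v := hμ ▸ hS2 m
  have := hVwFin m
  have : FiniteDimensional ℂ ↥(Vw m ⊓ V0) := finiteDimensional_of_le inf_le_left
  obtain ⟨n, g, ε, hg, hgE, hε⟩ := exists_linearIndependent_eigenvectors_of_sq_eq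
    (T := U ∘ₗ S) (p := Vw m ⊓ V0) (by simp [hμ0])
    (fun x hx => ⟨hUw m _ (hSw m _ hx.1), hU1 _ (hS0 _ hx.2)⟩)
    (fun x hx => comp_apply_comp_apply_eq_of_anticommute (hSw m) hU2m hS2m (hUS m) x hx.1)
  set L := μ⁻¹ • U
  have hL := inv_smul_apply_inv_smul_apply hμ0 hU2m
  have hLE : ∀ x ∈ Vw m ⊓ V0, L x ∈ Vw m ⊓ V1 := fun x hx =>
    ⟨smul_mem _ _ (hUw m _ hx.1), smul_mem _ _ (hU0 _ hx.2)⟩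
  have hLO : ∀ x ∈ Vw m ⊓ V1, L x ∈ Vw m ⊓ V0 := fun x hx =>
    ⟨smul_mem _ _ (hUw m _ hx.1), smul_mem _ _ (hU1 _ hx.2)⟩
  have hφ : span ℂ (range (L ∘ g)) = Vw m ⊓ V1 := by
    rw [range_comp, ← map_span, hgE, map_eq_of_forall_apply_apply_eq hLE hLO (hL · ·.1)]
  have hgφ : LinearIndependent ℂ (Sum.elim g (L ∘ g)) := by
    refine hg.sum_type (hg.map ?_) ?_
    · exact hgE ▸ disjoint_ker_of_forall_apply_apply_eq (hL · ·.1)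
    · exact hgE ▸ hφ ▸ hgrading.disjoint.mono inf_le_right inf_le_right
  refine ⟨n, fun j => span ℂ {g j, L (g j)}, μ, hμ, iSupIndep_span_pair hgφ,
    (iSup_span_pair g (L ∘ g)).trans (by rw [hgE, hφ, ← hVwGraded m]), fun j => ?_⟩
  have hgj : g j ∈ Vw m ⊓ V0 := hgE ▸ subset_span (mem_range_self j)
  obtain ⟨hUf, hUφ, hSf, hSφ⟩ := su11_pair_relations hμ0 (hSw m) hU2m (hUS m) hgj.1 (hε j).2
  exact ⟨span_pair_eq_inf_sup_inf hgj.2 (hLE _ hgj).2, mapsTo_span_pair hUf hUφ,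
    mapsTo_span_pair hSf hSφ, g j, L (g j), ε j, (hε j).1, hgj.2, (hLE _ hgj).2,
    hg.ne_zero j, hgφ.ne_zero (Sum.inr j), hUf, hUφ, hSf, hSφ, rfl⟩

/-- **Theorem 4.3 of the paper.** Let `V` be a ℤ/2-graded complex
vector space with a decomposition `V = ⨁_{m ∈ ℤ} V_m` into finite-dimensional graded
weight spaces, and let `U`, `S` be odd linear endomorphisms preserving each `V_m`,
with `U² v = S² v = -i·m·v` and `(US + SU) v = 0` for `v ∈ V_m`.  Then for every
`m ≠ 0`, the weight space `V_m` decomposes as a finite direct sum of graded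
`1|1`-dimensional subspaces `W_j`, each invariant under `U` and `S`, with homogeneous
basis `f_j` (even), `φ_j` (odd) satisfying `U f_j = μ φ_j`, `U φ_j = μ f_j`,
`S f_j = ε_j iμ φ_j`, `S φ_j = -ε_j iμ f_j`, where `μ² = -i·m` and `ε_j ∈ {±1}`.
Hence `V ≅ V₀ ⊕ ⨁ W_m⁺ ⊕ ⨁ W_k⁻` with `W_m^±` the super weight spaces of `SU(1|1)`. -/
theorem su11_structure_theorem
    (V : Type*) [AddCommGroup V] [Module ℂ V]
    (V0 V1 : Submodule ℂ V) (hgrading : IsCompl V0 V1)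
    (Vw : ℤ → Submodule ℂ V)
    (hVwIndep : iSupIndep Vw) (hVwSup : (⨆ m : ℤ, Vw m) = ⊤)
    (hVwGraded : ∀ m : ℤ, Vw m = (Vw m ⊓ V0) ⊔ (Vw m ⊓ V1))
    (hVwFin : ∀ m : ℤ, FiniteDimensional ℂ ↥(Vw m))
    (U S : V →ₗ[ℂ] V)
    (hU0 : ∀ v ∈ V0, U v ∈ V1) (hU1 : ∀ v ∈ V1, U v ∈ V0)
    (hS0 : ∀ v ∈ V0, S v ∈ V1) (hS1 : ∀ v ∈ V1, S v ∈ V0)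
    (hUw : ∀ m : ℤ, ∀ v ∈ Vw m, U v ∈ Vw m)
    (hSw : ∀ m : ℤ, ∀ v ∈ Vw m, S v ∈ Vw m)
    (hU2 : ∀ m : ℤ, ∀ v ∈ Vw m, U (U v) = (-Complex.I * (m : ℂ)) • v)
    (hS2 : ∀ m : ℤ, ∀ v ∈ Vw m, S (S v) = (-Complex.I * (m : ℂ)) • v)
    (hUS : ∀ m : ℤ, ∀ v ∈ Vw m, U (S v) + S (U v) = 0) :
    ∀ m : ℤ, m ≠ 0 →
      ∃ (n : ℕ) (W : Fin n → Submodule ℂ V) (μ : ℂ),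
        μ ^ 2 = -Complex.I * (m : ℂ) ∧
        iSupIndep W ∧ (⨆ j : Fin n, W j) = Vw m ∧
        ∀ j : Fin n,
          W j = (W j ⊓ V0) ⊔ (W j ⊓ V1) ∧
          (∀ v ∈ W j, U v ∈ W j) ∧ (∀ v ∈ W j, S v ∈ W j) ∧
          ∃ (f φ : V) (ε : ℂ), (ε = 1 ∨ ε = -1) ∧
            f ∈ V0 ∧ φ ∈ V1 ∧ f ≠ 0 ∧ φ ≠ 0 ∧
            U f = μ • φ ∧ U φ = μ • f ∧
            S f = (ε * (Complex.I * μ)) • φ ∧ S φ = (-(ε * (Complex.I * μ))) • f ∧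
            W j = Submodule.span ℂ {f, φ} :=
  su11_structure_theorem_general V V0 V1 hgrading Vw hVwGraded hVwFin U S hU0 hU1 hS0 hUw hSw hU2
    hS2 hUS
end

section
/- Let Λ = ⋀(ℂ²) be the 4-dimensional exterior algebra over ℂ on two generators θ, η (with basis 1, θ, η, θη), equipped with any norm. In the Banach space C(S¹, Λ) of continuous functions from the unit circle S¹ ⊆ ℂ to Λ with the supremum norm, the ℂ-linear span of the set of functions {z ↦ z^m(1 + mθη), z ↦ z^m(1 − mθη), z ↦ z^m(θ − iη), z ↦ z^m(θ + iη) : m ∈ ℤ} ∪ {1, θ, η, θη} is dense. -/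
/-! A continuous `f : S¹ → Λ` is a finite sum `∑ fᵢ • vᵢ` of scalar functions times vectors
`vᵢ ∈ {1, θ, η, θη}`, and by Stone–Weierstrass each `fᵢ` is a uniform limit of Laurent
polynomials in `z`. So it suffices that every `z ↦ z^m • v` lies in the span, which holds because
for each `m` the super weight vectors `1 ± mθη`, `θ ∓ iη`, together with the constant `θη` when
`m = 0`, span `Λ`. -/

open Submodule Set

noncomputable def circleMonomial (m : ℤ) : C(Circle, ℂ) :=
  ⟨fun z => (z : ℂ) ^ m, continuous_subtype_val.zpow₀ m fun z => .inl (Circle.coe_ne_zero z)⟩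

@[simp] lemma circleMonomial_apply (m : ℤ) (z : Circle) : circleMonomial m z = (z : ℂ) ^ m := rfl

lemma circleMonomial_zero : circleMonomial 0 = 1 := by
  ext z; simp

lemma circleMonomial_add (m n : ℤ) :
    circleMonomial (m + n) = circleMonomial m * circleMonomial n := by
  ext z; simp [zpow_add₀ (Circle.coe_ne_zero z)]

lemma star_circleMonomial (m : ℤ) : star (circleMonomial m) = circleMonomial (-m) := by
  ext z
  simp [← Circle.coe_inv_eq_conj]

noncomputable def circleMonomialSubalgebra : StarSubalgebra ℂ C(Circle, ℂ) where
  toSubalgebra := Algebra.adjoin ℂ (range circleMonomial)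
  star_mem' := by
    change Algebra.adjoin ℂ (range circleMonomial) ≤ star (Algebra.adjoin ℂ (range circleMonomial))
    refine Algebra.adjoin_le ?_
    rintro - ⟨m, rfl⟩
    exact Algebra.subset_adjoin ⟨-m, (star_circleMonomial m).symm⟩

lemma circleMonomialSubalgebra_toSubmodule :
    Subalgebra.toSubmodule circleMonomialSubalgebra.toSubalgebra =
      span ℂ (range circleMonomial) := by
  refine Algebra.adjoin_eq_span_of_subset ℂ (Subset.trans ?_ subset_span)
  intro f hf
  refine Submonoid.closure_induction (fun _ => id) ⟨0, circleMonomial_zero⟩ ?_ hf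
  rintro - - - - ⟨m, rfl⟩ ⟨n, rfl⟩
  exact ⟨m + n, circleMonomial_add m n⟩

lemma dense_span_circleMonomial : Dense (span ℂ (range circleMonomial) : Set C(Circle, ℂ)) := by
  have hsep : circleMonomialSubalgebra.SeparatesPoints := by
    intro x y hxy
    refine ⟨_, ⟨circleMonomial 1, Algebra.subset_adjoin ⟨1, rfl⟩, rfl⟩, ?_⟩
    simpa using hxy ∘ Circle.ext
  rw [dense_iff_topologicalClosure_eq_top, ← circleMonomialSubalgebra_toSubmodule]
  exact congr_arg (Subalgebra.toSubmodule <| StarSubalgebra.toSubalgebra ·)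
    (ContinuousMap.starSubalgebra_topologicalClosure_eq_top_of_separatesPoints _ hsep)

theorem ExteriorAlgebra.span_one_ι_ι_mul_ι_fin_two (R : Type*) [CommRing R] :
    span R {1, ι R (Pi.single 0 1 : Fin 2 → R), ι R (Pi.single 1 1 : Fin 2 → R),
      ι R (Pi.single 0 1 : Fin 2 → R) * ι R (Pi.single 1 1 : Fin 2 → R)} = ⊤ := by
  let b := (Pi.basisFun R (Fin 2)).ExteriorAlgebra
  have hempty : b ∅ = 1 := by
    rw [basis_apply_ofCard _ Finset.card_empty, ιMulti_family, ιMulti_zero_apply]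
  have hsingleton (i : Fin 2) : b {i} = ι R (Pi.single i 1) := by
    rw [basis_apply_ofCard _ (Finset.card_singleton i)]
    simp [ιMulti_family, ιMulti_apply, Set.powersetCard.ofFinEmbEquiv_symm_apply]
  have huniv : b Finset.univ = ι R (Pi.single 0 1) * ι R (Pi.single 1 1) := by
    have hid (h : (Finset.univ : Finset (Fin 2)).card = 2) (i : Fin 2) :
        Finset.univ.orderEmbOfFin h i = i :=
      congrFun (Finset.orderEmbOfFin_unique h (f := id) (by simp) strictMono_id).symm i
    rw [basis_apply_ofCard _ (Finset.card_fin 2)]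
    simp [ιMulti_family, ιMulti_apply, Set.powersetCard.ofFinEmbEquiv_symm_apply, hid,
      Matrix.vecTail]
  rw [eq_top_iff, ← b.span_eq]
  refine span_mono ?_
  rintro - ⟨s, rfl⟩
  obtain rfl | rfl | rfl | rfl : s = ∅ ∨ s = {0} ∨ s = {1} ∨ s = Finset.univ := by decide +revert
  all_goals simp [hempty, hsingleton, huniv]

namespace ContinuousMap

section

variable {X R M : Type*} [TopologicalSpace X] [CommSemiring R] [TopologicalSpace R]
  [AddCommMonoid M] [Module R M] [TopologicalSpace M] [ContinuousSMul R M] [ContinuousAdd M]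

def smulConstₗ (f : C(X, R)) : M →ₗ[R] C(X, M) where
  toFun v := f • const X v
  map_add' v w := by ext x; exact smul_add (f x) v w
  map_smul' c v := by ext x; exact smul_comm (f x) c v

@[simp] lemma smulConstₗ_apply (f : C(X, R)) (v : M) : smulConstₗ f v = f • const X v := rfl

end

theorem dense_of_subset_comap_smulConstₗ {X 𝕜 E : Type*} [TopologicalSpace X]
    [NontriviallyNormedField 𝕜] [CompleteSpace 𝕜] [AddCommGroup E] [Module 𝕜 E]
    [TopologicalSpace E] [IsTopologicalAddGroup E] [ContinuousSMul 𝕜 E] [T2Space E]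
    [FiniteDimensional 𝕜 E] {s : Set C(X, 𝕜)} (hs : Dense (span 𝕜 s : Set C(X, 𝕜)))
    {V : Set E} (hV : span 𝕜 V = ⊤) {M : Submodule 𝕜 C(X, E)}
    (hM : ∀ f ∈ s, V ⊆ M.comap (smulConstₗ f)) : Dense (M : Set C(X, E)) := by
  have hsmul (v : E) (f : C(X, 𝕜)) : f • const X v ∈ M.topologicalClosure := by
    let T := (ContinuousLinearMap.toSpanSingleton 𝕜 v).compLeftContinuous 𝕜 X
    have hspan : span 𝕜 s ≤ M.topologicalClosure.comap T.toLinearMap := by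
      refine span_le.2 fun f hf => M.le_topologicalClosure ?_
      have hv : v ∈ span 𝕜 V := hV ▸ mem_top
      exact span_le.2 (hM f hf) hv
    have := (span 𝕜 s).topologicalClosure_minimal hspan
      (M.isClosed_topologicalClosure.preimage T.continuous)
    rw [dense_iff_topologicalClosure_eq_top.1 hs] at this
    exact this mem_top
  rw [dense_iff_topologicalClosure_eq_top, eq_top_iff]
  rintro g -
  let b := Module.finBasis 𝕜 E
  have hg : g = ∑ i, (⟨b.coord i, LinearMap.continuous_of_finiteDimensional _⟩ : C(E, 𝕜)).comp g
      • const X (b i) := by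
    ext x
    simp [b.sum_repr]
  rw [hg]
  exact sum_mem fun i _ => hsmul _ _

end ContinuousMap

theorem Submodule.insert_subset_of_add_sub_mem {E : Type*} [AddCommGroup E] [Module ℂ E]
    {N : Submodule ℂ E} {a b c d : E} (t : ℂ) (h₁ : a + t • d ∈ N) (h₂ : a - t • d ∈ N)
    (h₃ : b - Complex.I • c ∈ N) (h₄ : b + Complex.I • c ∈ N) (h₀ : t = 0 → d ∈ N) :
    {a, b, c, d} ⊆ (N : Set E) := by
  simp only [insert_subset_iff, singleton_subset_iff, SetLike.mem_coe]
  refine ⟨?_, ?_, ?_, ?_⟩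
  · convert N.smul_mem (2 : ℂ)⁻¹ (N.add_mem h₁ h₂) using 1; module
  · convert N.smul_mem (2 : ℂ)⁻¹ (N.add_mem h₃ h₄) using 1; module
  · convert N.smul_mem (2 * Complex.I)⁻¹ (N.sub_mem h₄ h₃) using 1
    match_scalars <;> field_simp <;> ring
  · rcases eq_or_ne t 0 with ht | ht
    · exact h₀ ht
    · convert N.smul_mem (2 * t)⁻¹ (N.sub_mem h₁ h₂) using 1
      match_scalars <;> field_simp <;> ring

/-- **super Peter–Weyl for `SU(1|1) = S^{1|2}`, Theorem 4.6 of the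
paper.**  Let `Λ = ⋀(ℂ²)` be the 4-dimensional exterior algebra over ℂ on two
generators `θ, η` (basis `1, θ, η, θη`), equipped with any norm (we take an
arbitrary normed ℂ-vector space `Λ` identified ℂ-linearly with the exterior algebra
of `ℂ²`).  In the Banach space `C(S¹, Λ)` with the supremum norm, the ℂ-linear span
of the functions `z ↦ z^m (1 + mθη)`, `z ↦ z^m (1 - mθη)`, `z ↦ z^m (θ - iη)`,
`z ↦ z^m (θ + iη)` (`m ∈ ℤ`) together with the constants `1, θ, η, θη` is dense. -/
theorem peter_weyl_su11
    (Λ : Type*) [NormedAddCommGroup Λ] [NormedSpace ℂ Λ]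
    (e : Λ ≃ₗ[ℂ] ExteriorAlgebra ℂ (Fin 2 → ℂ))
    (oneΛ θΛ ηΛ θηΛ : Λ)
    (hone : oneΛ = e.symm 1)
    (hθ : θΛ = e.symm (ExteriorAlgebra.ι ℂ (Pi.single 0 1 : Fin 2 → ℂ)))
    (hη : ηΛ = e.symm (ExteriorAlgebra.ι ℂ (Pi.single 1 1 : Fin 2 → ℂ)))
    (hθη : θηΛ = e.symm (ExteriorAlgebra.ι ℂ (Pi.single 0 1 : Fin 2 → ℂ) *
      ExteriorAlgebra.ι ℂ (Pi.single 1 1 : Fin 2 → ℂ))) :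
    Dense (↑(Submodule.span ℂ
      {f : C(Circle, Λ) |
        (∃ m : ℤ,
          (∀ z : Circle, f z = ((z : ℂ) ^ m) • (oneΛ + (m : ℂ) • θηΛ)) ∨
          (∀ z : Circle, f z = ((z : ℂ) ^ m) • (oneΛ - (m : ℂ) • θηΛ)) ∨
          (∀ z : Circle, f z = ((z : ℂ) ^ m) • (θΛ - Complex.I • ηΛ)) ∨
          (∀ z : Circle, f z = ((z : ℂ) ^ m) • (θΛ + Complex.I • ηΛ))) ∨
        (∀ z : Circle, f z = oneΛ) ∨ (∀ z : Circle, f z = θΛ) ∨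
        (∀ z : Circle, f z = ηΛ) ∨ (∀ z : Circle, f z = θηΛ)}) :
      Set C(Circle, Λ)) := by
  have hspan : span ℂ {oneΛ, θΛ, ηΛ, θηΛ} = ⊤ := by
    have himage : ({oneΛ, θΛ, ηΛ, θηΛ} : Set Λ) = e.symm.toLinearMap '' {1,
        ExteriorAlgebra.ι ℂ (Pi.single 0 1 : Fin 2 → ℂ),
        ExteriorAlgebra.ι ℂ (Pi.single 1 1 : Fin 2 → ℂ),
        ExteriorAlgebra.ι ℂ (Pi.single 0 1 : Fin 2 → ℂ) *
          ExteriorAlgebra.ι ℂ (Pi.single 1 1 : Fin 2 → ℂ)} := by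
      simp [hone, hθ, hη, hθη, image_insert_eq]
    rw [himage, span_image, ExteriorAlgebra.span_one_ι_ι_mul_ι_fin_two, Submodule.map_top,
      LinearEquiv.range]
  have : FiniteDimensional ℂ Λ := ⟨hspan ▸ fg_span (toFinite _)⟩
  refine ContinuousMap.dense_of_subset_comap_smulConstₗ dense_span_circleMonomial hspan ?_
  rintro - ⟨m, rfl⟩
  apply Submodule.insert_subset_of_add_sub_mem (m : ℂ)
  · exact subset_span (.inl ⟨m, .inl fun _ => rfl⟩)
  · exact subset_span (.inl ⟨m, .inr <| .inl fun _ => rfl⟩)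
  · exact subset_span (.inl ⟨m, .inr <| .inr <| .inl fun _ => rfl⟩)
  · exact subset_span (.inl ⟨m, .inr <| .inr <| .inr fun _ => rfl⟩)
  · intro hm
    exact subset_span (.inr <| .inr <| .inr <| .inr fun _ => by simp [Int.cast_eq_zero.1 hm])
end

section
/- Let A be a supercommutative ℂ-algebra and let g = [[a, b], [c, d]] be a 2×2 matrix over A with a, d ∈ A₀ invertible and b, c ∈ A₁. Then there exist unique elements t, s ∈ A₀ invertible and θ, η ∈ A₁ such that g = [[t, 0], [0, s]] · [[1, θ], [−iθ, 1]] · [[1, iη], [−η, 1]], i.e. g = diag(t, s)(1 + θU)(1 + ηS) where U = [[0, 1], [−i, 0]] and S = [[0, i], [−1, 0]] are the complex matrices defining the odd generators of su(1|1). -/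
/-! Put `n = θη`. The product `diag(t, s)(1 + θU)(1 + ηS)` is
`[[t(1 - n), t(θ + iη)], [-s(iθ + η), s(1 + n)]]`. For odd `θ, η` the element `n` kills `θ` and
`η`, so `n² = 0` and `1 ± n` are mutually inverse; the four entry equations then become
`t = a(1 + n)`, `θ + iη = a⁻¹b`, `iθ + η = -d⁻¹c`, `s = d(1 - n)`. The middle two are an invertible
ℂ-linear system for `(θ, η)`, after which `t` and `s` are forced. Conversely these values solve
the equations, and they have the right parities because the inverse of an even unit is even. -/

open Complex

section SquareZero

variable {R : Type*} [Ring R] {n : R}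

theorem one_sub_mul_one_add_of_mul_self_eq_zero (h : n * n = 0) : (1 - n) * (1 + n) = 1 := by
  rw [sub_mul, one_mul, mul_add, mul_one, h, add_zero, add_sub_cancel_right]

theorem one_add_mul_one_sub_of_mul_self_eq_zero (h : n * n = 0) : (1 + n) * (1 - n) = 1 := by
  rw [add_mul, one_mul, mul_sub, mul_one, h, sub_zero, sub_add_cancel]

theorem eq_mul_one_sub_iff_of_mul_self_eq_zero {a t : R} (h : n * n = 0) :
    a = t * (1 - n) ↔ t = a * (1 + n) := by
  constructor <;> rintro rfl
  · rw [mul_assoc, one_sub_mul_one_add_of_mul_self_eq_zero h, mul_one]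
  · rw [mul_assoc, one_add_mul_one_sub_of_mul_self_eq_zero h, mul_one]

theorem eq_mul_one_add_iff_of_mul_self_eq_zero {d s : R} (h : n * n = 0) :
    d = s * (1 + n) ↔ s = d * (1 - n) := by
  simpa [sub_eq_add_neg] using
    eq_mul_one_sub_iff_of_mul_self_eq_zero (a := d) (t := s) (n := -n) (by rwa [neg_mul_neg])

end SquareZero

theorem Submodule.units_inv_mem_of_isCompl {R A : Type*} [Ring R] [Ring A] [Module R A]
    {A0 A1 : Submodule R A} (hsum : IsCompl A0 A1) (h1mem : (1 : A) ∈ A0)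
    (h00 : ∀ x ∈ A0, ∀ y ∈ A0, x * y ∈ A0) (h01 : ∀ x ∈ A0, ∀ y ∈ A1, x * y ∈ A1)
    {u : Aˣ} (hu : (u : A) ∈ A0) : ((u⁻¹ : Aˣ) : A) ∈ A0 := by
  obtain ⟨e, o, he, ho, heo⟩ := Submodule.codisjoint_iff_exists_add_eq.1 hsum.codisjoint ↑u⁻¹
  have huo_even : (u : A) * o ∈ A0 := by
    have huo : (u : A) * o = 1 - u * e := by rw [eq_sub_iff_add_eq', ← mul_add, heo, u.mul_inv]
    exact huo ▸ sub_mem h1mem (h00 _ hu _ he)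
  have huo_zero : (u : A) * o = 0 :=
    Submodule.disjoint_def.1 hsum.disjoint _ huo_even (h01 _ hu _ ho)
  have ho_zero : o = 0 := by rw [← u.inv_mul_cancel_left o, huo_zero, mul_zero]
  rwa [← heo, ho_zero, add_zero]

section SolveOdd

variable {M : Type*} [AddCommGroup M] [Module ℂ M]

noncomputable def solveOdd (β γ : M) : M × M :=
  ((2⁻¹ : ℂ) • (β - I • γ), (2⁻¹ : ℂ) • (γ - I • β))

theorem add_smul_eq_and_smul_add_eq_iff {θ η β γ : M} :
    θ + I • η = β ∧ I • θ + η = γ ↔ (θ, η) = solveOdd β γ := by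
  rw [solveOdd, Prod.mk.injEq]
  constructor <;> rintro ⟨rfl, rfl⟩ <;>
    constructor <;> match_scalars <;> ring_nf <;> simp only [I_sq] <;> ring

theorem solveOdd_mem {S : Submodule ℂ M} {β γ : M} (hβ : β ∈ S) (hγ : γ ∈ S) :
    (solveOdd β γ).1 ∈ S ∧ (solveOdd β γ).2 ∈ S :=
  ⟨S.smul_mem _ (S.sub_mem hβ (S.smul_mem _ hγ)), S.smul_mem _ (S.sub_mem hγ (S.smul_mem _ hβ))⟩

end SolveOdd

section Factorization

variable {A : Type*} [Ring A] [Algebra ℂ A]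

def su11Factored (t s θ η : A) : Matrix (Fin 2) (Fin 2) A :=
  !![t, 0; 0, s] * !![1, θ; -(algebraMap ℂ A I * θ), 1] * !![1, algebraMap ℂ A I * η; -η, 1]

theorem su11Factored_eq (t s θ η : A) :
    su11Factored t s θ η =
      !![t * (1 - θ * η), t * (θ + I • η); -(s * (I • θ + η)), s * (1 + θ * η)] := by
  simp only [su11Factored, Matrix.mul_fin_two, ← Algebra.smul_def]
  congr 1
  simp [mul_add, smul_smul, mul_assoc, add_comm, sub_eq_add_neg]

structure IsOddPair (θ η : A) : Prop where
  mul_self_left : θ * θ = 0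
  mul_self_right : η * η = 0
  anticomm : η * θ = -(θ * η)

theorem isOddPair_of_mem {A1 : Submodule ℂ A} (hanti : ∀ x ∈ A1, ∀ y ∈ A1, x * y = -(y * x))
    {θ η : A} (hθ : θ ∈ A1) (hη : η ∈ A1) : IsOddPair θ η := by
  have := IsAddTorsionFree.of_isTorsionFree ℂ A
  exact ⟨self_eq_neg.1 (hanti θ hθ θ hθ), self_eq_neg.1 (hanti η hη η hη), hanti η hη θ hθ⟩

namespace IsOddPair

variable {θ η : A}

theorem mul_mul_smul_add_smul (h : IsOddPair θ η) (x y : ℂ) :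
    θ * η * (x • θ + y • η) = 0 := by
  have hθ : θ * η * θ = 0 := by
    rw [mul_assoc, h.anticomm, mul_neg, ← mul_assoc, h.mul_self_left, zero_mul, neg_zero]
  have hη : θ * η * η = 0 := by rw [mul_assoc, h.mul_self_right, mul_zero]
  rw [mul_add, mul_smul_comm, mul_smul_comm, hθ, hη, smul_zero, smul_zero, add_zero]

theorem mul_mul_self (h : IsOddPair θ η) : θ * η * (θ * η) = 0 := by
  simpa [mul_assoc] using congrArg (· * η) (h.mul_mul_smul_add_smul 1 0)

theorem eq_su11Factored_iff {a b c d t s : A} (h : IsOddPair θ η) :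
    !![a, b; c, d] = su11Factored t s θ η ↔
      t = a * (1 + θ * η) ∧ a * (θ + I • η) = b ∧ d * (I • θ + η) = -c ∧
        s = d * (1 - θ * η) := by
  rw [su11Factored_eq]
  simp only [EmbeddingLike.apply_eq_iff_eq, Matrix.vecCons_inj, and_true, and_assoc]
  rw [eq_mul_one_sub_iff_of_mul_self_eq_zero (a := a) h.mul_mul_self,
    eq_mul_one_add_iff_of_mul_self_eq_zero (d := d) h.mul_mul_self]
  have hβ0 : θ * η * (θ + I • η) = 0 := by simpa using h.mul_mul_smul_add_smul 1 I
  have hγ0 : θ * η * (I • θ + η) = 0 := by simpa using h.mul_mul_smul_add_smul I 1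
  have hβ : a * (1 + θ * η) * (θ + I • η) = a * (θ + I • η) := by
    rw [mul_assoc, add_mul, one_mul, hβ0, add_zero]
  have hγ : d * (1 - θ * η) * (I • θ + η) = d * (I • θ + η) := by
    rw [mul_assoc, sub_mul, one_mul, hγ0, sub_zero]
  constructor <;> rintro ⟨rfl, hb, hc, rfl⟩ <;> refine ⟨rfl, ?_, ?_, rfl⟩
  · rw [hb, hβ]
  · rw [hc, neg_neg, hγ]
  · rw [hβ, hb]
  · rw [hγ, hc, neg_neg]

theorem units_eq_su11Factored_iff {a d : Aˣ} {b c t s : A} (h : IsOddPair θ η) :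
    !![↑a, b; c, ↑d] = su11Factored t s θ η ↔
      (θ, η) = solveOdd (↑a⁻¹ * b) (↑d⁻¹ * -c) ∧ t = a * (1 + θ * η) ∧ s = d * (1 - θ * η) := by
  rw [h.eq_su11Factored_iff, ← add_smul_eq_and_smul_add_eq_iff, ← Units.eq_inv_mul_iff_mul_eq,
    ← Units.eq_inv_mul_iff_mul_eq]
  tauto

end IsOddPair

end Factorization

theorem su11_unique_factorization_general
    (A : Type*) [Ring A] [Algebra ℂ A]
    (A0 A1 : Submodule ℂ A) (hsum : IsCompl A0 A1)
    (h1mem : (1 : A) ∈ A0)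
    (h00 : ∀ x ∈ A0, ∀ y ∈ A0, x * y ∈ A0)
    (h01 : ∀ x ∈ A0, ∀ y ∈ A1, x * y ∈ A1)
    (h11 : ∀ x ∈ A1, ∀ y ∈ A1, x * y ∈ A0)
    (hanti : ∀ x ∈ A1, ∀ y ∈ A1, x * y = -(y * x))
    (a b c d : A)
    (ha : a ∈ A0) (hd : d ∈ A0) (haU : IsUnit a) (hdU : IsUnit d)
    (hb : b ∈ A1) (hc : c ∈ A1) :
    ∃! p : A × A × A × A,
      p.1 ∈ A0 ∧ IsUnit p.1 ∧
      p.2.1 ∈ A0 ∧ IsUnit p.2.1 ∧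
      p.2.2.1 ∈ A1 ∧ p.2.2.2 ∈ A1 ∧
      (!![a, b; c, d] : Matrix (Fin 2) (Fin 2) A) =
        !![p.1, 0; 0, p.2.1] *
        !![1, p.2.2.1; -(algebraMap ℂ A Complex.I * p.2.2.1), 1] *
        !![1, algebraMap ℂ A Complex.I * p.2.2.2; -p.2.2.2, 1] := by
  obtain ⟨a, rfl⟩ := haU
  obtain ⟨d, rfl⟩ := hdU
  have hodd : ∀ θ ∈ A1, ∀ η ∈ A1, IsOddPair θ η := fun θ hθ η hη => isOddPair_of_mem hanti hθ hη
  obtain ⟨⟨θ, η⟩, hq⟩ : ∃ q, solveOdd (↑a⁻¹ * b) (↑d⁻¹ * -c) = q := ⟨_, rfl⟩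
  obtain ⟨hθ, hη⟩ : θ ∈ A1 ∧ η ∈ A1 := by
    simpa only [hq] using solveOdd_mem
      (h01 _ (Submodule.units_inv_mem_of_isCompl hsum h1mem h00 h01 ha) _ hb)
      (h01 _ (Submodule.units_inv_mem_of_isCompl hsum h1mem h00 h01 hd) _ (A1.neg_mem hc))
  have hn : IsNilpotent (θ * η) := ⟨2, by rw [pow_two, (hodd θ hθ η hη).mul_mul_self]⟩
  have hn0 : θ * η ∈ A0 := h11 θ hθ η hη
  refine ⟨(a * (1 + θ * η), d * (1 - θ * η), θ, η),
    ⟨h00 _ ha _ (A0.add_mem h1mem hn0), a.isUnit.mul hn.isUnit_one_add,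
      h00 _ hd _ (A0.sub_mem h1mem hn0), d.isUnit.mul hn.isUnit_one_sub, hθ, hη,
      (hodd θ hθ η hη).units_eq_su11Factored_iff.2 ⟨hq.symm, rfl, rfl⟩⟩, ?_⟩
  rintro ⟨t, s, θ', η'⟩ ⟨-, -, -, -, hθ', hη', hg⟩
  obtain ⟨hθη, rfl, rfl⟩ := (hodd θ' hθ' η' hη').units_eq_su11Factored_iff.1 hg
  obtain ⟨rfl, rfl⟩ := Prod.mk.inj (hθη.trans hq)
  rfl

/-- **Lemma 4.4 of the paper.** Let `A` be a supercommutative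
ℂ-algebra and `g = [[a, b], [c, d]]` a `2×2` matrix over `A` with `a, d ∈ A₀`
invertible and `b, c ∈ A₁`.  Then there exist unique invertible `t, s ∈ A₀` and
`θ, η ∈ A₁` with
`g = [[t, 0], [0, s]] · [[1, θ], [-iθ, 1]] · [[1, iη], [-η, 1]]`,
i.e. `g = diag(t, s)(1 + θU)(1 + ηS)` for the odd generators `U`, `S` of `su(1|1)`. -/
theorem su11_unique_factorization
    (A : Type*) [Ring A] [Algebra ℂ A]
    (A0 A1 : Submodule ℂ A) (hsum : IsCompl A0 A1)
    (h1mem : (1 : A) ∈ A0)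
    (h00 : ∀ x ∈ A0, ∀ y ∈ A0, x * y ∈ A0)
    (h01 : ∀ x ∈ A0, ∀ y ∈ A1, x * y ∈ A1)
    (h10 : ∀ x ∈ A1, ∀ y ∈ A0, x * y ∈ A1)
    (h11 : ∀ x ∈ A1, ∀ y ∈ A1, x * y ∈ A0)
    (hcentral : ∀ x ∈ A0, ∀ y : A, x * y = y * x)
    (hanti : ∀ x ∈ A1, ∀ y ∈ A1, x * y = -(y * x))
    (a b c d : A)
    (ha : a ∈ A0) (hd : d ∈ A0) (haU : IsUnit a) (hdU : IsUnit d)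
    (hb : b ∈ A1) (hc : c ∈ A1) :
    ∃! p : A × A × A × A,
      p.1 ∈ A0 ∧ IsUnit p.1 ∧
      p.2.1 ∈ A0 ∧ IsUnit p.2.1 ∧
      p.2.2.1 ∈ A1 ∧ p.2.2.2 ∈ A1 ∧
      (!![a, b; c, d] : Matrix (Fin 2) (Fin 2) A) =
        !![p.1, 0; 0, p.2.1] *
        !![1, p.2.2.1; -(algebraMap ℂ A Complex.I * p.2.2.1), 1] *
        !![1, algebraMap ℂ A Complex.I * p.2.2.2; -p.2.2.2, 1] :=
  su11_unique_factorization_general A A0 A1 hsum h1mem h00 h01 h11 hanti a b c d ha hd haU hdU hb hc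
end

section
/- Let V be a finite-dimensional ℤ/2-graded complex vector space, m a nonzero integer, and U, S odd linear endomorphisms of V satisfying U² = S² = −i·m·id_V and U S = −S U. Let f ∈ V₀ be a nonzero even vector with (US) f = λ f for some λ ∈ ℂ. Then: λ² = m²; U f is a nonzero odd vector; (US)(U f) = −λ·U f; S f = (iλ/m)·U f; and the two-dimensional subspace span_ℂ{f, U f} is invariant under both U and S. -/
/-- Let `V` be a finite-dimensional ℤ/2-graded complex vector space,
`m` a nonzero integer, and `U`, `S` odd linear endomorphisms of `V` satisfying
`U² = S² = -i·m·id` and `US = -SU`.  Let `f ∈ V₀` be a nonzero even vector with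
`(US) f = λ f`.  Then `λ² = m²`, `U f` is a nonzero odd vector,
`(US)(U f) = -λ • U f`, `S f = (iλ/m) • U f`, and `span ℂ {f, U f}` is invariant
under both `U` and `S`. -/
theorem invariant_subspace_construction
    (V : Type*) [AddCommGroup V] [Module ℂ V] [FiniteDimensional ℂ V]
    (V0 V1 : Submodule ℂ V) (hgrading : IsCompl V0 V1)
    (m : ℤ) (hm : m ≠ 0)
    (U S : V →ₗ[ℂ] V)
    (hU0 : ∀ v ∈ V0, U v ∈ V1) (hU1 : ∀ v ∈ V1, U v ∈ V0)
    (hS0 : ∀ v ∈ V0, S v ∈ V1) (hS1 : ∀ v ∈ V1, S v ∈ V0)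
    (hU2 : U ∘ₗ U = (-Complex.I * (m : ℂ)) • (LinearMap.id : V →ₗ[ℂ] V))
    (hS2 : S ∘ₗ S = (-Complex.I * (m : ℂ)) • (LinearMap.id : V →ₗ[ℂ] V))
    (hUS : U ∘ₗ S = -(S ∘ₗ U))
    (f : V) (hf0 : f ∈ V0) (hf : f ≠ 0)
    (lam : ℂ) (heig : U (S f) = lam • f) :
    lam ^ 2 = (m : ℂ) ^ 2 ∧
    U f ≠ 0 ∧ U f ∈ V1 ∧
    U (S (U f)) = (-lam) • U f ∧
    S f = (Complex.I * lam / (m : ℂ)) • U f ∧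
    (∀ v ∈ Submodule.span ℂ ({f, U f} : Set V), U v ∈ Submodule.span ℂ ({f, U f} : Set V)) ∧
    (∀ v ∈ Submodule.span ℂ ({f, U f} : Set V), S v ∈ Submodule.span ℂ ({f, U f} : Set V)) := by
  have hmC : (m : ℂ) ≠ 0 := Int.cast_ne_zero.mpr hm
  have hc : (-Complex.I * (m : ℂ)) ≠ 0 := by
    simp [Complex.I_ne_zero, hmC]
  have hUU : ∀ v : V, U (U v) = (-Complex.I * (m : ℂ)) • v := fun v => by
    have := LinearMap.congr_fun hU2 v; simpa using this
  have hSS : ∀ v : V, S (S v) = (-Complex.I * (m : ℂ)) • v := fun v => by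
    have := LinearMap.congr_fun hS2 v; simpa using this
  have hUSv : ∀ v : V, U (S v) = -(S (U v)) := fun v => by
    have := LinearMap.congr_fun hUS v; simpa using this
  -- S f formula
  have hUheig : U (U (S f)) = lam • U f := by rw [heig]; simp
  have hSf : S f = (Complex.I * lam / (m : ℂ)) • U f := by
    have h1 : (-Complex.I * (m : ℂ)) • S f = lam • U f := by
      rw [← hUU (S f)]; exact hUheig
    have h2 : S f = (-Complex.I * (m : ℂ))⁻¹ • (lam • U f) := by
      rw [← h1, smul_smul, inv_mul_cancel₀ hc, one_smul]
    rw [h2, smul_smul]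
    congr 1
    field_simp
    ring_nf
    rw [Complex.I_sq]
    ring
  -- λ² = m²
  have hUSUS : U (S (U (S f))) = (m : ℂ)^2 • f := by
    rw [hUSv (U (S f)), hUU (S f), map_smul, hSS f, smul_smul, ← neg_smul]
    congr 1
    ring_nf
    rw [Complex.I_sq]
    ring
  have hlam2 : lam ^ 2 = (m : ℂ) ^ 2 := by
    have : (lam ^ 2) • f = ((m : ℂ) ^ 2) • f := by
      rw [← hUSUS, heig, map_smul, map_smul, heig, smul_smul, sq]
    by_contra hne
    exact hf (by
      have := sub_eq_zero.mpr this
      rw [← sub_smul] at this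
      exact (smul_eq_zero.mp this).resolve_left (sub_ne_zero.mpr hne))
  have hUf_ne : U f ≠ 0 := by
    intro h
    apply hf
    have := hUU f
    rw [h, map_zero] at this
    exact (smul_eq_zero.mp this.symm).resolve_left hc
  -- (US)(Uf) = -λ Uf
  have hmain : U (S (U f)) = (-lam) • U f := by
    rw [hUSv (U f), hUU f, map_smul, hSf, smul_smul, ← neg_smul]
    congr 1
    field_simp
    ring_nf
    rw [Complex.I_sq]
    ring
  refine ⟨hlam2, hUf_ne, hU0 f hf0, hmain, hSf, ?_, ?_⟩
  · intro v hv
    induction hv using Submodule.span_induction with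
    | mem x hx =>
      rcases hx with h | h
      · subst h
        exact Submodule.subset_span (by simp)
      · simp only [Set.mem_singleton_iff] at h; subst h
        rw [hUU f]
        exact Submodule.smul_mem _ _ (Submodule.subset_span (by simp))
    | zero => simp
    | add x y _ _ hx hy => rw [map_add]; exact Submodule.add_mem _ hx hy
    | smul c x _ hx => rw [map_smul]; exact Submodule.smul_mem _ _ hx
  · intro v hv
    induction hv using Submodule.span_induction with
    | mem x hx =>
      rcases hx with h | h
      · subst h
        rw [hSf]
        exact Submodule.smul_mem _ _ (Submodule.subset_span (by simp))
      · simp only [Set.mem_singleton_iff] at h; subst h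
        have hSU : S (U f) = (-lam) • f := by
          have h1 := hUSv f
          rw [heig] at h1
          rw [neg_smul]; exact neg_eq_iff_eq_neg.mp h1.symm
        rw [hSU]
        exact Submodule.smul_mem _ _ (Submodule.subset_span (by simp))
    | zero => simp
    | add x y _ _ hx hy => rw [map_add]; exact Submodule.add_mem _ hx hy
    | smul c x _ hx => rw [map_smul]; exact Submodule.smul_mem _ _ hx
end
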